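/- arXiv:2009.11540 — 3 statements merged into one kernel-verified Lean document; each statement's English description precedes it below -/
import Mathlib

section
/- Let n, p, m be natural numbers, let λ : Fin n → ℂ satisfy Re(λ i) < 0 for all i, and let Φ : Fin n → Matrix (Fin p) (Fin m) ℂ. Assume there is an involution σ : Fin n → Fin n with σ ∘ σ = id, λ(σ i) = conj(λ i), and Φ(σ i) equal to the entrywise complex conjugate of Φ i, for all i. Let α : Fin n → ℝ satisfy α(σ i) = α i for all i, let D_e be a real p × m matrix (viewed as a complex matrix with real entries), and let ω > 0. Then the coercion to ℂ of the real number (1/(2π)) · ∫_{ν ∈ [−ω, ω]} ‖D_e + ∑ i, (1 − α i) • ((I·ν − λ i)⁻¹ • Φ i)‖_F² dν equals (ω/π) · ‖D_e‖_F² − (2/π) · ∑ i, (1 − α i) · tr(Φ i · D_eᵀ) · atan(ω / λ i) − (2/π) · ∑ i, ∑ k, (1 − α i) · (1 − α k) · tr(Φ i · (Φ k)ᵀ) · atan(ω / λ i) / (−λ i − λ k). -/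
/-!
Since poles, residues and weights are closed under the conjugation `σ`, the entrywise conjugate
of the error `E(iν)` is `E(-iν)`, so `‖E(iν)‖_F² = tr (E(iν) E(-iν)ᵀ)`. This expands bilinearly
into a constant, terms linear in the resolvents `(iν - λᵢ)⁻¹` and `(-iν - λᵢ)⁻¹`, and products
`(iν - λᵢ)⁻¹ (-iν - λₖ)⁻¹`, which split into partial fractions over `-λᵢ - λₖ`. Each resolvent
integrates to `∫_{-ω}^{ω} (iν - λ)⁻¹ dν = -2 atan (ω / λ)`: averaged with its reflection
`ν ↦ -ν`, the integrand becomes `-2λ / (λ² + ν²)`, the derivative of `-2 atan (ν / λ)`.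
Finally, the symmetry of `tr (Φᵢ Φₖᵀ)` in `(i, k)` merges the two arctangents of each product.
-/

open MeasureTheory Complex Matrix

/-- Squared Frobenius norm of a complex matrix. -/
noncomputable def frobSq {p m : ℕ} (M : Matrix (Fin p) (Fin m) ℂ) : ℝ :=
  ∑ i, ∑ j, ‖M i j‖ ^ 2

/-- Principal-branch complex arctangent. -/
noncomputable def catan (z : ℂ) : ℂ :=
  (1 / (2 * Complex.I)) *
    (Complex.log (1 + Complex.I * z) - Complex.log (1 - Complex.I * z))

lemma catan_neg (z : ℂ) : catan (-z) = -catan z := by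
  simp only [catan, mul_neg, ← sub_eq_add_neg, sub_neg_eq_add]
  rw [← mul_neg, neg_sub]

lemma hasDerivAt_catan {z : ℂ} (h₁ : 1 + I * z ∈ slitPlane) (h₂ : 1 - I * z ∈ slitPlane) :
    HasDerivAt catan (1 + z ^ 2)⁻¹ z := by
  have hlog₁ := ((hasDerivAt_const_mul I).const_add 1).clog h₁
  have hlog₂ := ((hasDerivAt_const_mul I).const_sub 1).clog h₂
  refine ((hlog₁.sub hlog₂).const_mul (1 / (2 * I))).congr_deriv ?_
  have hz : 1 + z ^ 2 = (1 + I * z) * (1 - I * z) := by linear_combination z ^ 2 * I_sq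
  rw [hz]
  field_simp [slitPlane_ne_zero h₁, slitPlane_ne_zero h₂, I_ne_zero]
  ring

section Resolvent

variable {l : ℂ}

lemma I_mul_ofReal_sub_ne_zero (hl : l.re ≠ 0) (t : ℝ) : I * t - l ≠ 0 := fun h =>
  hl (by simpa using congrArg re h)

lemma one_add_I_mul_ofReal_div_mem_slitPlane (hl : l.re ≠ 0) (t : ℝ) :
    1 + I * (t / l) ∈ slitPlane := by
  rcases eq_or_ne t 0 with rfl | ht
  · simp
  · refine Or.inr ?_
    have hn : normSq l ≠ 0 := (normSq_pos.mpr (fun h => hl (by simp [h]))).ne'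
    simpa [div_re, hn, ht] using hl

lemma hasDerivAt_catan_ofReal_div (hl : l.re ≠ 0) (t : ℝ) :
    HasDerivAt (fun s : ℝ => catan (s / l)) ((1 + (t / l) ^ 2)⁻¹ * l⁻¹) t := by
  have h₂ : 1 - I * (t / l) ∈ slitPlane := by
    simpa [neg_div, sub_eq_add_neg] using one_add_I_mul_ofReal_div_mem_slitPlane hl (-t)
  have := (hasDerivAt_catan (one_add_I_mul_ofReal_div_mem_slitPlane hl t) h₂).comp (t : ℂ)
    ((hasDerivAt_id (t : ℂ)).div_const l)
  simpa [div_eq_mul_inv] using this.comp_ofReal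

lemma continuous_resolvent (hl : l.re ≠ 0) : Continuous fun ν : ℝ => (I * ν - l)⁻¹ :=
  (by fun_prop : Continuous fun ν : ℝ => I * ν - l).inv₀ (I_mul_ofReal_sub_ne_zero hl)

lemma continuous_resolvent_neg (hl : l.re ≠ 0) : Continuous fun ν : ℝ => (I * ↑(-ν) - l)⁻¹ :=
  (continuous_resolvent hl).comp continuous_neg

lemma resolvent_add_resolvent_neg (hl : l.re ≠ 0) (ν : ℝ) :
    (I * ν - l)⁻¹ + (I * ↑(-ν) - l)⁻¹ = -2 * ((1 + (ν / l) ^ 2)⁻¹ * l⁻¹) := by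
  have h₁ := I_mul_ofReal_sub_ne_zero hl ν
  have h₂ := I_mul_ofReal_sub_ne_zero hl (-ν)
  have hl₀ : l ≠ 0 := fun h => hl (by simp [h])
  have hsq : l ^ 2 + ν ^ 2 = (I * ν - l) * (I * ↑(-ν) - l) := by
    push_cast; linear_combination (ν : ℂ) ^ 2 * I_sq
  have hsq₀ : l ^ 2 + (ν : ℂ) ^ 2 ≠ 0 := hsq ▸ mul_ne_zero h₁ h₂
  rw [show 1 + ((ν : ℂ) / l) ^ 2 = (l ^ 2 + ν ^ 2) / l ^ 2 by field_simp, hsq]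
  field_simp
  push_cast
  ring

lemma integral_resolvent_neg_eq (ω : ℝ) :
    ∫ ν in -ω..ω, (I * ↑(-ν) - l)⁻¹ = ∫ ν in -ω..ω, (I * ν - l)⁻¹ := by
  rw [intervalIntegral.integral_comp_neg (fun ν : ℝ => (I * ν - l)⁻¹), neg_neg]

lemma integral_resolvent (hl : l.re ≠ 0) (ω : ℝ) :
    ∫ ν in -ω..ω, (I * ν - l)⁻¹ = -2 * catan (ω / l) := by
  have hcont := continuous_resolvent hl
  have hcont_neg := continuous_resolvent_neg hl
  have hsum : ∫ ν in -ω..ω, ((I * ν - l)⁻¹ + (I * ↑(-ν) - l)⁻¹) = -4 * catan (ω / l) := by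
    rw [intervalIntegral.integral_eq_sub_of_hasDerivAt (f := fun t : ℝ => -2 * catan (t / l))
      (fun t _ => ((hasDerivAt_catan_ofReal_div hl t).const_mul _).congr_deriv
        (resolvent_add_resolvent_neg hl t).symm)
      ((hcont.add hcont_neg).intervalIntegrable _ _)]
    push_cast
    rw [neg_div, catan_neg]
    ring
  rw [intervalIntegral.integral_add (hcont.intervalIntegrable _ _)
    (hcont_neg.intervalIntegrable _ _), integral_resolvent_neg_eq] at hsum
  linear_combination hsum / 2

lemma integral_resolvent_neg (hl : l.re ≠ 0) (ω : ℝ) :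
    ∫ ν in -ω..ω, (I * ↑(-ν) - l)⁻¹ = -2 * catan (ω / l) := by
  rw [integral_resolvent_neg_eq, integral_resolvent hl]

lemma resolvent_mul_resolvent_neg {l' : ℂ} (hl : l.re ≠ 0) (hl' : l'.re ≠ 0) (h : l + l' ≠ 0)
    (ν : ℝ) :
    (I * ν - l)⁻¹ * (I * ↑(-ν) - l')⁻¹ = ((I * ν - l)⁻¹ + (I * ↑(-ν) - l')⁻¹) / (-l - l') := by
  have h₁ := I_mul_ofReal_sub_ne_zero hl ν
  have h₂ := I_mul_ofReal_sub_ne_zero hl' (-ν)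
  have h₃ : -l - l' ≠ 0 := by rw [← neg_add']; exact neg_ne_zero.mpr h
  field_simp
  push_cast
  ring

lemma integral_resolvent_mul_resolvent_neg {l' : ℂ} (hl : l.re ≠ 0) (hl' : l'.re ≠ 0)
    (h : l + l' ≠ 0) (ω : ℝ) :
    ∫ ν in -ω..ω, (I * ν - l)⁻¹ * (I * ↑(-ν) - l')⁻¹ =
      -2 * (catan (ω / l) + catan (ω / l')) / (-l - l') := by
  simp_rw [resolvent_mul_resolvent_neg hl hl' h]
  rw [intervalIntegral.integral_div, intervalIntegral.integral_add
    ((continuous_resolvent hl).intervalIntegrable _ _)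
    ((continuous_resolvent_neg hl').intervalIntegrable _ _),
    integral_resolvent hl, integral_resolvent_neg hl']
  ring

end Resolvent

lemma integral_resolvent_expansion {ι : Type*} [Fintype ι] {lam : ι → ℂ}
    (hlam : ∀ i, (lam i).re ≠ 0) (hpair : ∀ i k, lam i + lam k ≠ 0)
    (F : ℂ) (a : ι → ℂ) (b : ι → ι → ℂ) (ω : ℝ) :
    ∫ ν in -ω..ω, (F + ∑ i, a i * (I * ν - lam i)⁻¹ + ∑ i, a i * (I * ↑(-ν) - lam i)⁻¹ +
        ∑ i, ∑ k, b i k * ((I * ν - lam i)⁻¹ * (I * ↑(-ν) - lam k)⁻¹)) =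
      2 * ω * F - 4 * ∑ i, a i * catan (ω / lam i) -
        2 * ∑ i, ∑ k, b i k * (catan (ω / lam i) + catan (ω / lam k)) / (-lam i - lam k) := by
  have hr := fun i => continuous_resolvent (hlam i)
  have hs := fun i => continuous_resolvent_neg (hlam i)
  have hint : ∀ {f : ℝ → ℂ}, Continuous f → IntervalIntegrable f volume (-ω) ω :=
    fun hf => hf.intervalIntegrable _ _
  rw [intervalIntegral.integral_add (hint (by fun_prop)) (hint (by fun_prop)),
    intervalIntegral.integral_add (hint (by fun_prop)) (hint (by fun_prop)),
    intervalIntegral.integral_add (hint (by fun_prop)) (hint (by fun_prop))]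
  have hsum : ∀ {f : ι → ℝ → ℂ}, (∀ i, Continuous (f i)) →
      ∫ ν in -ω..ω, ∑ i, f i ν = ∑ i, ∫ ν in -ω..ω, f i ν :=
    fun hf => intervalIntegral.integral_finsetSum fun i _ => hint (hf i)
  simp (disch := (intro; fun_prop)) only [hsum]
  simp only [intervalIntegral.integral_const, intervalIntegral.integral_const_mul,
    integral_resolvent (hlam _), integral_resolvent_neg (hlam _),
    integral_resolvent_mul_resolvent_neg (hlam _) (hlam _) (hpair _ _)]
  simp only [mul_div_assoc, mul_left_comm _ (-2 : ℂ), ← Finset.mul_sum, real_smul]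
  push_cast
  ring

lemma ofReal_frobSq {p m : ℕ} (M : Matrix (Fin p) (Fin m) ℂ) :
    (frobSq M : ℂ) = (M * (M.map (starRingEnd ℂ))ᵀ).trace := by
  simp [frobSq, trace, mul_apply, mul_conj, Complex.sq_norm]

lemma trace_mul_transpose_comm {m n R : Type*} [Fintype m] [Fintype n] [CommSemiring R]
    (A B : Matrix m n R) : (A * Bᵀ).trace = (B * Aᵀ).trace := by
  rw [← trace_transpose, transpose_mul, transpose_transpose]

lemma trace_mul_transpose_add_sum {ι m n R : Type*} [Fintype ι] [Fintype m] [Fintype n]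
    [CommRing R] (D : Matrix m n R) (Φ : ι → Matrix m n R) (u v : ι → R) :
    ((D + ∑ i, u i • Φ i) * (D + ∑ k, v k • Φ k)ᵀ).trace =
      (D * Dᵀ).trace + ∑ i, u i * (Φ i * Dᵀ).trace + ∑ k, v k * (Φ k * Dᵀ).trace +
        ∑ i, ∑ k, u i * v k * (Φ i * (Φ k)ᵀ).trace := by
  simp only [transpose_add, transpose_sum, transpose_smul, Matrix.add_mul, Matrix.mul_add,
    Matrix.sum_mul, Matrix.mul_sum, Matrix.smul_mul, Matrix.mul_smul, trace_add, trace_sum,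
    trace_smul, smul_eq_mul, trace_mul_transpose_comm D]
  simp only [mul_add, Finset.mul_sum, Finset.sum_add_distrib]
  rw [Finset.sum_comm (γ := ι) (f := fun x y => v x * (u y * _))]
  simp only [mul_left_comm (v _), mul_assoc, add_assoc]

lemma map_conj_sum_smul_of_involutive {ι m n : Type*} [Fintype ι] {σ : ι → ι}
    (hσ : Function.Involutive σ) {Φ : ι → Matrix m n ℂ}
    (hΦ : ∀ i, Φ (σ i) = (Φ i).map (starRingEnd ℂ)) {w w' : ι → ℂ}
    (hw : ∀ i, w (σ i) = starRingEnd ℂ (w' i)) :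
    (∑ i, w' i • Φ i).map (starRingEnd ℂ) = ∑ i, w i • Φ i := calc
  _ = ∑ i, w (σ i) • Φ (σ i) := by ext; simp [Matrix.sum_apply, hw, hΦ]
  _ = ∑ i, w i • Φ i := Equiv.sum_comp (hσ.toPerm σ) (fun i => w i • Φ i)

lemma ofReal_frobSq_add_sum_smul_resolvent {ι : Type*} [Fintype ι] {p m : ℕ} {σ : ι → ι}
    (hσ : Function.Involutive σ) {lam : ι → ℂ} (hlam : ∀ i, lam (σ i) = starRingEnd ℂ (lam i))
    {Φ : ι → Matrix (Fin p) (Fin m) ℂ} (hΦ : ∀ i, Φ (σ i) = (Φ i).map (starRingEnd ℂ))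
    {c : ι → ℝ} (hc : ∀ i, c (σ i) = c i) (D : Matrix (Fin p) (Fin m) ℝ) (ν : ℝ) :
    (frobSq (D.map (fun x => (x : ℂ)) + ∑ i, c i • ((I * ν - lam i)⁻¹ • Φ i)) : ℂ) =
      frobSq (D.map (fun x => (x : ℂ))) +
        ∑ i, c i * (Φ i * (D.map (fun x => (x : ℂ)))ᵀ).trace * (I * ν - lam i)⁻¹ +
        ∑ i, c i * (Φ i * (D.map (fun x => (x : ℂ)))ᵀ).trace * (I * ↑(-ν) - lam i)⁻¹ +
        ∑ i, ∑ k, c i * c k * (Φ i * (Φ k)ᵀ).trace *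
          ((I * ν - lam i)⁻¹ * (I * ↑(-ν) - lam k)⁻¹) := by
  set Dc := D.map (fun x => (x : ℂ))
  have hDc : Dc.map (starRingEnd ℂ) = Dc := by ext; simp [Dc]
  have hsmul : ∑ i, c i • ((I * ν - lam i)⁻¹ • Φ i) = ∑ i, (c i * (I * ν - lam i)⁻¹) • Φ i := by
    simp only [← smul_assoc, real_smul]
  have hconj : (Dc + ∑ i, (c i * (I * ν - lam i)⁻¹) • Φ i).map (starRingEnd ℂ) =
      Dc + ∑ i, (c i * (I * ↑(-ν) - lam i)⁻¹) • Φ i := by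
    rw [Matrix.map_add _ (map_add _), hDc, map_conj_sum_smul_of_involutive hσ hΦ]
    intro i
    simp [hc, hlam]
  rw [ofReal_frobSq, hsmul, hconj, trace_mul_transpose_add_sum, ofReal_frobSq, hDc]
  simp only [mul_comm, mul_assoc, mul_left_comm]

lemma sum_sum_mul_add_div_of_symm {ι K : Type*} [Fintype ι] [Field K] {A d : ι → ι → K}
    (hA : ∀ i k, A i k = A k i) (hd : ∀ i k, d i k = d k i) (f : ι → K) :
    ∑ i, ∑ k, A i k * (f i + f k) / d i k = 2 * ∑ i, ∑ k, A i k * f i / d i k := by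
  simp only [mul_add, add_div, Finset.sum_add_distrib]
  rw [Finset.sum_comm (f := fun i k => A i k * f k / d i k), two_mul]
  congr 1
  exact Finset.sum_congr rfl fun i _ => Finset.sum_congr rfl fun k _ => by rw [hA, hd]

theorem optimal_freq_limited_H2_modal_truncation_error_decomposition_general
    (n p m : ℕ) (lam : Fin n → ℂ) (hlam : ∀ i, (lam i).re < 0)
    (Φ : Fin n → Matrix (Fin p) (Fin m) ℂ)
    (σ : Fin n → Fin n) (hsigsig : σ ∘ σ = id)
    (hsiglam : ∀ i, lam (σ i) = (starRingEnd ℂ) (lam i))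
    (hsigPhi : ∀ i, Φ (σ i) = (Φ i).map (starRingEnd ℂ))
    (α : Fin n → ℝ) (hα : ∀ i, α (σ i) = α i)
    (De : Matrix (Fin p) (Fin m) ℝ) (ω : ℝ) :
    ((((1 : ℝ) / (2 * Real.pi)) *
        ∫ ν in (-ω)..ω,
          frobSq (De.map (fun x => (x : ℂ)) +
            ∑ i, (1 - α i) • ((Complex.I * (ν : ℂ) - lam i)⁻¹ • Φ i)) : ℝ) : ℂ) =
      ((ω / Real.pi : ℝ) : ℂ) * ((frobSq (De.map (fun x => (x : ℂ))) : ℝ) : ℂ) -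
        ((2 / Real.pi : ℝ) : ℂ) *
          ∑ i, ((1 - α i : ℝ) : ℂ) *
            (Φ i * (De.map (fun x => (x : ℂ)))ᵀ).trace * catan ((ω : ℂ) / lam i) -
        ((2 / Real.pi : ℝ) : ℂ) *
          ∑ i, ∑ k, ((1 - α i : ℝ) : ℂ) * ((1 - α k : ℝ) : ℂ) *
            (Φ i * (Φ k)ᵀ).trace * catan ((ω : ℂ) / lam i) / (-lam i - lam k) := by
  have hpair : ∀ i k, lam i + lam k ≠ 0 := fun i k h => by
    linarith [hlam i, hlam k, congrArg re h, add_re (lam i) (lam k), zero_re]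
  rw [ofReal_mul, ← intervalIntegral.integral_ofReal]
  simp_rw [ofReal_frobSq_add_sum_smul_resolvent (fun i => congrFun hsigsig i) hsiglam hsigPhi
    (c := fun i => 1 - α i) (by simp [hα]) De]
  rw [integral_resolvent_expansion (fun i => (hlam i).ne) hpair,
    sum_sum_mul_add_div_of_symm (fun i k => by rw [trace_mul_transpose_comm]; ring)
      (fun i k => by ring)]
  push_cast
  ring

theorem optimal_freq_limited_H2_modal_truncation_error_decomposition
    (n p m : ℕ) (lam : Fin n → ℂ) (hlam : ∀ i, (lam i).re < 0)
    (Φ : Fin n → Matrix (Fin p) (Fin m) ℂ)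
    (σ : Fin n → Fin n) (hsigsig : σ ∘ σ = id)
    (hsiglam : ∀ i, lam (σ i) = (starRingEnd ℂ) (lam i))
    (hsigPhi : ∀ i, Φ (σ i) = (Φ i).map (starRingEnd ℂ))
    (α : Fin n → ℝ) (hα : ∀ i, α (σ i) = α i)
    (De : Matrix (Fin p) (Fin m) ℝ) (ω : ℝ) (hω : 0 < ω) :
    ((((1 : ℝ) / (2 * Real.pi)) *
        ∫ ν in (-ω)..ω,
          frobSq (De.map (fun x => (x : ℂ)) +
            ∑ i, (1 - α i) • ((Complex.I * (ν : ℂ) - lam i)⁻¹ • Φ i)) : ℝ) : ℂ) =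
      ((ω / Real.pi : ℝ) : ℂ) * ((frobSq (De.map (fun x => (x : ℂ))) : ℝ) : ℂ) -
        ((2 / Real.pi : ℝ) : ℂ) *
          ∑ i, ((1 - α i : ℝ) : ℂ) *
            (Φ i * (De.map (fun x => (x : ℂ)))ᵀ).trace * catan ((ω : ℂ) / lam i) -
        ((2 / Real.pi : ℝ) : ℂ) *
          ∑ i, ∑ k, ((1 - α i : ℝ) : ℂ) * ((1 - α k : ℝ) : ℂ) *
            (Φ i * (Φ k)ᵀ).trace * catan ((ω : ℂ) / lam i) / (-lam i - lam k) :=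
  optimal_freq_limited_H2_modal_truncation_error_decomposition_general n p m lam hlam Φ σ hsigsig
    hsiglam hsigPhi α hα De ω
end

section
/- Let n, p, m be natural numbers, let λ : Fin n → ℂ satisfy Re(λ i) < 0 for all i, and let Φ : Fin n → Matrix (Fin p) (Fin m) ℂ. Then the H₂-norm squared of H(s) = ∑ᵢ Φᵢ/(s − λᵢ) satisfies: (1/(2π)) · ∫_{ν ∈ ℝ} ‖∑ i, (I·ν − λ i)⁻¹ • Φ i‖_F² dν = ∑ i, ∑ k, tr(Φ i · (Φ k)ᴴ) / (−λ i − conj(λ k)), where the double sum on the right is a real number (i.e., the complex double sum equals the coercion of the real-valued integral on the left). -/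
/-!
Expanding the squared Frobenius norm of `∑ cᵢ • Φᵢ` gives `∑ᵢ ∑ₖ cᵢ c̄ₖ tr (Φᵢ Φₖᴴ)`, so everything
reduces to `∫ (Iν - a)⁻¹ conj (Iν - b)⁻¹ dν = 2π / (-a - b̄)` for `Re a, Re b < 0`. The integrand is
a product of two `L²` functions, hence integrable, and partial fractions split it as
`(-a - b̄)⁻¹ ((Iν - a)⁻¹ + conj (Iν - b)⁻¹)`. The summands are not integrable, but their symmetric
integrals over `[-R, R]` converge: `-I log (Iν - a)` is an antiderivative of `(Iν - a)⁻¹`, and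
`log (IR - a) - log (-IR - a) → log I - log (-I) = πI`, so each symmetric integral tends to `π`.
-/

open MeasureTheory Complex Matrix

open Filter Topology ComplexConjugate

theorem ofReal_frobSq_eq_trace {p m : ℕ} (M : Matrix (Fin p) (Fin m) ℂ) :
    (frobSq M : ℂ) = (M * Mᴴ).trace := by
  simp [frobSq, Matrix.trace, Matrix.mul_apply, Complex.mul_conj, Complex.normSq_eq_norm_sq]

theorem ofReal_frobSq_sum_smul {ι : Type*} [Fintype ι] {p m : ℕ} (c : ι → ℂ)
    (Φ : ι → Matrix (Fin p) (Fin m) ℂ) :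
    (frobSq (∑ i, c i • Φ i) : ℂ) = ∑ i, ∑ k, c i * conj (c k) * (Φ i * (Φ k)ᴴ).trace := by
  simp only [ofReal_frobSq_eq_trace, conjTranspose_sum, Matrix.sum_mul, Matrix.mul_sum, trace_sum]
  rw [Finset.sum_comm]
  simp only [conjTranspose_smul, Matrix.smul_mul, Matrix.mul_smul, trace_smul, smul_eq_mul,
    star_def, mul_left_comm, mul_assoc]

theorem norm_inv_I_mul_sub_sq (a : ℂ) (ν : ℝ) :
    ‖(I * ν - a)⁻¹‖ ^ 2 = (a.re ^ 2 + (ν - a.im) ^ 2)⁻¹ := by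
  rw [norm_inv, inv_pow, Complex.sq_norm, normSq_apply]
  simp only [sub_re, sub_im, mul_re, mul_im, I_re, I_im, ofReal_re, ofReal_im]
  ring

theorem integrable_inv_sq_add_sq_sub {c : ℝ} (hc : c ≠ 0) (t : ℝ) :
    Integrable (fun x : ℝ => (c ^ 2 + (x - t) ^ 2)⁻¹) := by
  have h : Integrable (fun x : ℝ => (c ^ 2)⁻¹ * (1 + (c⁻¹ * x) ^ 2)⁻¹) :=
    (integrable_inv_one_add_sq.comp_mul_left' (inv_ne_zero hc)).const_mul _
  refine (h.congr (Eventually.of_forall fun x => ?_)).comp_sub_right t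
    (f := fun x => (c ^ 2 + x ^ 2)⁻¹)
  field_simp

theorem I_mul_sub_ne_zero {a : ℂ} (ha : a.re ≠ 0) (ν : ℝ) : I * ν - a ≠ 0 := by
  intro h
  exact ha (by simpa using congrArg re h)

theorem I_mul_sub_mem_slitPlane {a : ℂ} (ha : a.re < 0) (ν : ℝ) : I * ν - a ∈ slitPlane :=
  Or.inl (by simpa using ha)

theorem continuous_inv_I_mul_sub {a : ℂ} (ha : a.re ≠ 0) :
    Continuous (fun ν : ℝ => (I * ν - a)⁻¹) :=
  (by fun_prop : Continuous (fun ν : ℝ => I * ν - a)).inv₀ (I_mul_sub_ne_zero ha)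

theorem memLp_two_inv_I_mul_sub {a : ℂ} (ha : a.re ≠ 0) :
    MemLp (fun ν : ℝ => (I * ν - a)⁻¹) 2 := by
  rw [memLp_two_iff_integrable_sq_norm (continuous_inv_I_mul_sub ha).aestronglyMeasurable]
  simpa only [norm_inv_I_mul_sub_sq] using integrable_inv_sq_add_sq_sub ha a.im

theorem integrable_inv_I_mul_sub_mul_conj {a b : ℂ} (ha : a.re ≠ 0) (hb : b.re ≠ 0) :
    Integrable (fun ν : ℝ => (I * ν - a)⁻¹ * conj (I * ν - b)⁻¹) :=
  (memLp_two_inv_I_mul_sub ha).integrable_mul (memLp_two_inv_I_mul_sub hb).star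

theorem tendsto_log_ofReal_mul_add_sub_log {w : ℂ} (hw : w ∈ slitPlane) (γ : ℂ) :
    Tendsto (fun R : ℝ => log (R * w + γ) - Real.log R) atTop (𝓝 (log w)) := by
  have hlim : Tendsto (fun R : ℝ => w + γ * ((R⁻¹ : ℝ) : ℂ)) atTop (𝓝 w) := by
    simpa using tendsto_const_nhds.add (tendsto_inv_atTop_zero.ofReal.const_mul γ)
  refine ((continuousAt_clog hw).tendsto.comp hlim).congr' ?_
  filter_upwards [eventually_gt_atTop 0, hlim.eventually_ne (slitPlane_ne_zero hw)] with R hR hne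
  have hsplit : (R : ℂ) * w + γ = R * (w + γ * ((R⁻¹ : ℝ) : ℂ)) := by
    have hR' : (R : ℂ) ≠ 0 := ofReal_ne_zero.mpr hR.ne'
    push_cast
    field_simp
  simp only [Function.comp_apply, hsplit, log_ofReal_mul hR hne, add_sub_cancel_left]

theorem log_I_sub_log_neg_I : log I - log (-I) = Real.pi * I := by
  rw [log_I, log_neg_I]
  ring

theorem hasDerivAt_neg_I_mul_log_I_mul_sub {a : ℂ} (ha : a.re < 0) (ν : ℝ) :
    HasDerivAt (fun ν : ℝ => -I * log (I * ν - a)) (I * ν - a)⁻¹ ν := by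
  have hlin : HasDerivAt (fun ν : ℝ => I * ν - a) I ν := by
    simpa using ((hasDerivAt_id ν).ofReal_comp.const_mul I).sub_const a
  refine ((hlin.clog_real (I_mul_sub_mem_slitPlane ha ν)).const_mul (-I)).congr_deriv ?_
  rw [← mul_div_assoc, neg_mul, I_mul_I, neg_neg, one_div]

theorem tendsto_intervalIntegral_inv_I_mul_sub {a : ℂ} (ha : a.re < 0) :
    Tendsto (fun R : ℝ => ∫ ν in -R..R, (I * ν - a)⁻¹) atTop (𝓝 Real.pi) := by
  have hFTC (R : ℝ) : ∫ ν in -R..R, (I * ν - a)⁻¹ =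
      -I * ((log (R * I + -a) - Real.log R) - (log (R * -I + -a) - Real.log R)) := by
    rw [intervalIntegral.integral_eq_sub_of_hasDerivAt
      (fun ν _ => hasDerivAt_neg_I_mul_log_I_mul_sub ha ν)
      ((continuous_inv_I_mul_sub ha.ne).intervalIntegrable _ _)]
    push_cast
    ring_nf
  have hlog := (tendsto_log_ofReal_mul_add_sub_log (Or.inr (by simp) : I ∈ slitPlane) (-a)).sub
    (tendsto_log_ofReal_mul_add_sub_log (Or.inr (by simp) : -I ∈ slitPlane) (-a))
  rw [log_I_sub_log_neg_I] at hlog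
  simp_rw [hFTC]
  convert hlog.const_mul (-I) using 2
  rw [mul_left_comm, neg_mul, I_mul_I, neg_neg, mul_one]

theorem integral_inv_I_mul_sub_mul_conj {a b : ℂ} (ha : a.re < 0) (hb : b.re < 0) :
    ∫ ν : ℝ, (I * ν - a)⁻¹ * conj (I * ν - b)⁻¹ = 2 * Real.pi / (-a - conj b) := by
  have hne : -a - conj b ≠ 0 := by
    intro h
    have := congrArg re h
    simp only [sub_re, neg_re, conj_re, zero_re] at this
    linarith
  have hsplit (ν : ℝ) : (I * ν - a)⁻¹ * conj (I * ν - b)⁻¹ =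
      (-a - conj b)⁻¹ * ((I * ν - a)⁻¹ + conj (I * ν - b)⁻¹) := by
    have h1 := I_mul_sub_ne_zero ha.ne ν
    have h2 : conj (I * ν - b) ≠ 0 := (map_ne_zero _).mpr (I_mul_sub_ne_zero hb.ne ν)
    have hsum : -a - conj b = (I * ν - a) + conj (I * ν - b) := by
      simp only [map_sub, map_mul, conj_I, conj_ofReal]
      ring
    rw [map_inv₀, inv_add_inv h1 h2, ← hsum]
    field_simp
  have hint (R : ℝ) : ∫ ν in -R..R, (I * ν - a)⁻¹ * conj (I * ν - b)⁻¹ =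
      (-a - conj b)⁻¹ * ((∫ ν in -R..R, (I * ν - a)⁻¹) + conj (∫ ν in -R..R, (I * ν - b)⁻¹)) := by
    simp_rw [hsplit, intervalIntegral.integral_const_mul, ← intervalIntegral.intervalIntegral_conj]
    rw [intervalIntegral.integral_add (g := fun ν : ℝ => conj (I * ν - b)⁻¹)
      ((continuous_inv_I_mul_sub ha.ne).intervalIntegrable _ _)
      ((continuous_conj.comp (continuous_inv_I_mul_sub hb.ne)).intervalIntegrable _ _)]
  have hlim : Tendsto (fun R : ℝ => (-a - conj b)⁻¹ *
      ((∫ ν in -R..R, (I * ν - a)⁻¹) + conj (∫ ν in -R..R, (I * ν - b)⁻¹))) atTop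
      (𝓝 (2 * Real.pi / (-a - conj b))) := by
    have := ((tendsto_intervalIntegral_inv_I_mul_sub ha).add
      ((continuous_conj.tendsto _).comp (tendsto_intervalIntegral_inv_I_mul_sub hb))).const_mul
      (-a - conj b)⁻¹
    rwa [conj_ofReal, ← two_mul, inv_mul_eq_div] at this
  exact tendsto_nhds_unique ((intervalIntegral_tendsto_integral
    (integrable_inv_I_mul_sub_mul_conj ha.ne hb.ne) tendsto_neg_atTop_atBot tendsto_id).congr hint)
    hlim

theorem H2_norm_pole_residue_expression
    (n p m : ℕ) (lam : Fin n → ℂ) (hlam : ∀ i, (lam i).re < 0)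
    (Φ : Fin n → Matrix (Fin p) (Fin m) ℂ) :
    ((((1 : ℝ) / (2 * Real.pi)) *
        ∫ ν : ℝ, frobSq (∑ i, (Complex.I * (ν : ℂ) - lam i)⁻¹ • Φ i) : ℝ) : ℂ) =
      ∑ i, ∑ k, (Φ i * (Φ k)ᴴ).trace / (-lam i - (starRingEnd ℂ) (lam k)) := by
  have hint (i k : Fin n) : Integrable fun ν : ℝ =>
      (I * ν - lam i)⁻¹ * conj (I * ν - lam k)⁻¹ * (Φ i * (Φ k)ᴴ).trace :=
    (integrable_inv_I_mul_sub_mul_conj (hlam i).ne (hlam k).ne).mul_const _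
  have hπ : (Real.pi : ℂ) ≠ 0 := ofReal_ne_zero.mpr Real.pi_ne_zero
  push_cast
  rw [← integral_complex_ofReal]
  simp_rw [ofReal_frobSq_sum_smul]
  rw [integral_finsetSum _ fun i _ => integrable_finsetSum _ fun k _ => hint i k]
  simp_rw [integral_finsetSum _ fun k _ => hint _ k, integral_mul_const,
    integral_inv_I_mul_sub_mul_conj (hlam _) (hlam _), Finset.mul_sum]
  refine Finset.sum_congr rfl fun i _ => Finset.sum_congr rfl fun k _ => ?_
  field_simp
end

section
/- Let E be a finite index set, let λ : E → ℂ satisfy Re(λ i) < 0 for all i, let Φ : E → Matrix (Fin p) (Fin m) ℂ, and let ω > 0. Then Real.sqrt((1/(2π)) · ∫_{ν ∈ [−ω, ω]} ‖∑_{i ∈ E} (I·ν − λ i)⁻¹ • Φ i‖_F² dν) ≤ ∑_{i ∈ E} (‖Φ i‖_F / Real.sqrt(−2 · Re(λ i))) · Real.sqrt(−(2/π) · Re(atan(ω / λ i))). -/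
/-
Each summand ν ↦ (iν − λᵢ)⁻¹ Φᵢ is continuous, so Minkowski's inequality in L²([−ω, ω]) for
the Frobenius norm bounds the norm of the sum by the sum of the norms. Each of those is
explicit: ‖(iν − λ)⁻¹ Φ‖_F² = ‖Φ‖_F² / ((Re λ)² + (ν − Im λ)²) integrates over [−ω, ω] to
(arg(iω − λ) − arg(−iω − λ)) / (−Re λ). Since 1 ∓ iω/λ = (±iω − λ)·(−λ⁻¹) is a product of two
factors in the right half-plane, arguments add there, so this difference of arguments is
arg(1 − iω/λ) − arg(1 + iω/λ) = −2 Re atan(ω/λ).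
-/

open MeasureTheory Complex Matrix

/-- Frobenius norm of a complex matrix. -/
noncomputable def frobNorm {p m : ℕ} (M : Matrix (Fin p) (Fin m) ℂ) : ℝ :=
  Real.sqrt (frobSq M)

open Real

lemma lpNorm_two_eq_sqrt_integral_norm_sq {α V : Type*} [MeasurableSpace α] {μ : Measure α}
    [NormedAddCommGroup V] {f : α → V} (hf : AEStronglyMeasurable f μ) :
    lpNorm f 2 μ = √(∫ x, ‖f x‖ ^ 2 ∂μ) := by
  rw [lpNorm_eq_integral_norm_rpow_toReal two_ne_zero ENNReal.ofNat_ne_top hf, Real.sqrt_eq_rpow]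
  norm_num

lemma sqrt_integral_norm_sum_sq_le {α ι V : Type*} [MeasurableSpace α] {μ : Measure α}
    [Fintype ι] [NormedAddCommGroup V] {f : ι → α → V} (hf : ∀ i, MemLp (f i) 2 μ) :
    √(∫ x, ‖∑ i, f i x‖ ^ 2 ∂μ) ≤ ∑ i, √(∫ x, ‖f i x‖ ^ 2 ∂μ) := by
  have hsum : AEStronglyMeasurable (∑ i, f i) μ :=
    Finset.aestronglyMeasurable_sum _ fun i _ ↦ (hf i).aestronglyMeasurable
  simpa only [lpNorm_two_eq_sqrt_integral_norm_sq hsum, Finset.sum_apply,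
    lpNorm_two_eq_sqrt_integral_norm_sq (hf _).aestronglyMeasurable]
    using lpNorm_sum_le (s := Finset.univ) (fun i _ ↦ hf i) one_le_two

lemma sqrt_intervalIntegral_norm_sum_sq_le {ι V : Type*} [Fintype ι] [NormedAddCommGroup V]
    {f : ι → ℝ → V} (hf : ∀ i, Continuous (f i)) {x y : ℝ} (hxy : x ≤ y) :
    √(∫ ν in x..y, ‖∑ i, f i ν‖ ^ 2) ≤ ∑ i, √(∫ ν in x..y, ‖f i ν‖ ^ 2) := by
  simp only [intervalIntegral.integral_of_le hxy]
  refine sqrt_integral_norm_sum_sq_le fun i ↦ ?_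
  exact (memLp_two_iff_integrable_sq_norm (hf i).aestronglyMeasurable).2
    (((hf i).norm.pow 2).integrableOn_Ioc)

section Frobenius

open scoped Matrix.Norms.Frobenius

variable {p m : ℕ}

lemma frobSq_eq_norm_sq (M : Matrix (Fin p) (Fin m) ℂ) : frobSq M = ‖M‖ ^ 2 := by
  rw [frobenius_norm_def, ← Real.rpow_natCast, ← Real.rpow_mul (by positivity)]
  norm_num [frobSq]

lemma frobSq_nonneg (M : Matrix (Fin p) (Fin m) ℂ) : 0 ≤ frobSq M := by
  rw [frobSq_eq_norm_sq]; positivity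

lemma frobSq_smul (c : ℂ) (M : Matrix (Fin p) (Fin m) ℂ) :
    frobSq (c • M) = ‖c‖ ^ 2 * frobSq M := by
  rw [frobSq_eq_norm_sq, frobSq_eq_norm_sq, norm_smul, mul_pow]

lemma sqrt_intervalIntegral_frobSq_sum_le {ι : Type*} [Fintype ι]
    {f : ι → ℝ → Matrix (Fin p) (Fin m) ℂ} (hf : ∀ i, Continuous (f i)) {x y : ℝ} (hxy : x ≤ y) :
    √(∫ ν in x..y, frobSq (∑ i, f i ν)) ≤ ∑ i, √(∫ ν in x..y, frobSq (f i ν)) := by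
  simpa only [frobSq_eq_norm_sq] using sqrt_intervalIntegral_norm_sum_sq_le hf hxy

end Frobenius


lemma integral_inv_sq_add_sub_sq (a b x y : ℝ) (ha : a ≠ 0) :
    ∫ ν in x..y, (a ^ 2 + (ν - b) ^ 2)⁻¹
      = (Real.arctan ((y - b) / a) - Real.arctan ((x - b) / a)) / a := by
  have hderiv (ν : ℝ) : HasDerivAt (fun t ↦ Real.arctan ((t - b) / a) / a)
      (a ^ 2 + (ν - b) ^ 2)⁻¹ ν := by
    refine ((((hasDerivAt_id' ν).sub_const b).div_const a).arctan.div_const a).congr_deriv ?_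
    field_simp
  have hcont : Continuous fun ν : ℝ ↦ (a ^ 2 + (ν - b) ^ 2)⁻¹ :=
    by fun_prop (disch := intro ν; positivity)
  rw [intervalIntegral.integral_eq_sub_of_hasDerivAt (fun ν _ ↦ hderiv ν)
    (hcont.intervalIntegrable _ _)]
  ring

lemma catan_re (z : ℂ) : (catan z).re = ((1 + I * z).arg - (1 - I * z).arg) / 2 := by
  have : 1 / (2 * I) = -I / 2 := by field_simp; simp
  simp only [catan, this, mul_re, div_ofNat_re, neg_re, I_re, neg_zero, zero_div, sub_re,
    zero_mul, div_ofNat_im, neg_im, I_im, sub_im, log_im, zero_sub]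
  ring

lemma Complex.arg_eq_arctan_of_re_pos {z : ℂ} (hz : 0 < z.re) :
    z.arg = Real.arctan (z.im / z.re) := by
  rw [← tan_arg, Real.arctan_tan (neg_pi_div_two_lt_arg_iff.2 (.inl hz))
    (arg_lt_pi_div_two_iff.2 (.inl hz))]

lemma Complex.arg_mul_of_re_pos {z w : ℂ} (hz : 0 < z.re) (hw : 0 < w.re) :
    (z * w).arg = z.arg + w.arg := by
  have hz' := abs_lt.1 (abs_arg_lt_pi_div_two_iff.2 (.inl hz))
  have hw' := abs_lt.1 (abs_arg_lt_pi_div_two_iff.2 (.inl hw))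
  refine arg_mul (fun h ↦ by simp [h] at hz) (fun h ↦ by simp [h] at hw) ⟨?_, ?_⟩ <;> linarith

lemma neg_two_mul_catan_div_re {lam : ℂ} (hlam : lam.re < 0) (ω : ℝ) :
    -2 * (catan (ω / lam)).re
      = Real.arctan ((ω - lam.im) / -lam.re) + Real.arctan ((ω + lam.im) / -lam.re) := by
  have hlam0 : lam ≠ 0 := fun h ↦ by simp [h] at hlam
  have hu : 0 < (-lam⁻¹).re := by
    simpa [neg_div] using div_pos (neg_pos.2 hlam) (normSq_pos.2 hlam0)
  have hplus : 0 < (I * ω - lam).re := by simpa using hlam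
  have hminus : 0 < (-(I * ω) - lam).re := by simpa using hlam
  have hone_add : 1 + I * (ω / lam) = (-(I * ω) - lam) * -lam⁻¹ := by field_simp; ring
  have hone_sub : 1 - I * (ω / lam) = (I * ω - lam) * -lam⁻¹ := by field_simp; ring
  rw [catan_re, hone_add, hone_sub, arg_mul_of_re_pos hplus hu, arg_mul_of_re_pos hminus hu,
    arg_eq_arctan_of_re_pos hplus, arg_eq_arctan_of_re_pos hminus]
  have him_add : (-(I * ω) - lam).im / (-(I * ω) - lam).re = -((ω + lam.im) / -lam.re) := by
    simp only [sub_im, neg_im, mul_im, sub_re, neg_re, mul_re, I_re, I_im, ofReal_re, ofReal_im]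
    ring
  have him_sub : (I * ω - lam).im / (I * ω - lam).re = (ω - lam.im) / -lam.re := by
    simp only [sub_im, mul_im, sub_re, mul_re, I_re, I_im, ofReal_re, ofReal_im]
    ring
  rw [him_add, him_sub, Real.arctan_neg]
  ring

lemma continuous_inv_I_mul_ofReal_sub {lam : ℂ} (hlam : lam.re ≠ 0) :
    Continuous fun ν : ℝ ↦ (I * ν - lam)⁻¹ :=
  (by fun_prop : Continuous fun ν : ℝ ↦ I * ν - lam).inv₀ fun ν h ↦
    hlam (by simpa using congrArg re h)

lemma norm_inv_I_mul_ofReal_sub_sq (lam : ℂ) (ν : ℝ) :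
    ‖(I * ν - lam)⁻¹‖ ^ 2 = ((-lam.re) ^ 2 + (ν - lam.im) ^ 2)⁻¹ := by
  rw [norm_inv, inv_pow, Complex.sq_norm, normSq_apply]
  simp only [sub_re, mul_re, sub_im, mul_im, I_re, I_im, ofReal_re, ofReal_im]
  ring

lemma integral_norm_inv_I_mul_ofReal_sub_sq {lam : ℂ} (hlam : lam.re < 0) (ω : ℝ) :
    ∫ ν in (-ω)..ω, ‖(I * ν - lam)⁻¹‖ ^ 2 = -2 * (catan (ω / lam)).re / -lam.re := by
  simp_rw [norm_inv_I_mul_ofReal_sub_sq]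
  rw [integral_inv_sq_add_sub_sq _ _ _ _ (neg_pos.2 hlam).ne', neg_two_mul_catan_div_re hlam,
    show (-ω - lam.im) / -lam.re = -((ω + lam.im) / -lam.re) by ring, Real.arctan_neg]
  ring

lemma sqrt_integral_frobSq_inv_I_mul_ofReal_sub_smul {p m : ℕ} {lam : ℂ} (hlam : lam.re < 0)
    (Φ : Matrix (Fin p) (Fin m) ℂ) (ω : ℝ) :
    √(1 / (2 * π) * ∫ ν in (-ω)..ω, frobSq ((I * ν - lam)⁻¹ • Φ))
      = frobNorm Φ / √(-2 * lam.re) * √(-(2 / π) * (catan (ω / lam)).re) := by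
  have hint : ∫ ν in (-ω)..ω, frobSq ((I * ν - lam)⁻¹ • Φ)
      = frobSq Φ * (-2 * (catan (ω / lam)).re / -lam.re) := by
    simp_rw [frobSq_smul, intervalIntegral.integral_mul_const,
      integral_norm_inv_I_mul_ofReal_sub_sq hlam]
    ring
  have hlam' : 0 < -2 * lam.re := by linarith
  rw [hint, frobNorm, ← Real.sqrt_div (frobSq_nonneg Φ),
    ← Real.sqrt_mul (div_nonneg (frobSq_nonneg Φ) hlam'.le)]
  congr 1
  field_simp

theorem freq_limited_H2_truncation_error_bound
    (E : Type*) [Fintype E] (p m : ℕ)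
    (lam : E → ℂ) (hlam : ∀ i, (lam i).re < 0)
    (Φ : E → Matrix (Fin p) (Fin m) ℂ) (ω : ℝ) (hω : 0 < ω) :
    Real.sqrt (((1 : ℝ) / (2 * Real.pi)) *
        ∫ ν in (-ω)..ω, frobSq (∑ i, (Complex.I * (ν : ℂ) - lam i)⁻¹ • Φ i)) ≤
      ∑ i, (frobNorm (Φ i) / Real.sqrt (-2 * (lam i).re)) *
        Real.sqrt (-(2 / Real.pi) * (catan ((ω : ℂ) / lam i)).re) := by
  have hcont (i : E) : Continuous fun ν : ℝ ↦ (I * ν - lam i)⁻¹ • Φ i :=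
    (continuous_inv_I_mul_ofReal_sub (hlam i).ne).smul continuous_const
  rw [Real.sqrt_mul (by positivity)]
  calc _ ≤ √(1 / (2 * π)) * ∑ i, √(∫ ν in (-ω)..ω, frobSq ((I * ν - lam i)⁻¹ • Φ i)) := by
        gcongr
        exact sqrt_intervalIntegral_frobSq_sum_le hcont (neg_le_self hω.le)
    _ = _ := by
        rw [Finset.mul_sum]
        refine Finset.sum_congr rfl fun i _ ↦ ?_
        rw [← Real.sqrt_mul (by positivity),
          sqrt_integral_frobSq_inv_I_mul_ofReal_sub_smul (hlam i)]
end
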